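/- arXiv:1610.09987 — 3 statements merged into one kernel-verified Lean document; each statement's English description precedes it below -/
import Mathlib

section
/- Let Π = ⟨x₁, x₂ | x₁²x₂² = 1⟩ and G = SL(2, ℂ). Define φ by φ(x₁) = diag(ζ₈, ζ₈⁻¹) and φ(x₂) = diag(ζ₈⁻¹, ζ₈), where ζ₈ = e^{πi/4}. Then φ is a well-defined homomorphism, ⋂_{i=1,2} ker(Ad_{φ(x_i)} + 1) = 0 in sl(2,ℂ), while ⋂_{i=1,2} ker(Ad_{φ(x_i)} − 1) = ℂσ₃ is one-dimensional. -/
open Complex Matrix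

noncomputable section
namespace S11

abbrev z : ℂ := exp ((Real.pi : ℂ) * I / 4)
abbrev A : Matrix (Fin 2) (Fin 2) ℂ := !![z, 0; 0, z⁻¹]
abbrev B : Matrix (Fin 2) (Fin 2) ℂ := !![z⁻¹, 0; 0, z]

lemma hz : z ≠ 0 := Complex.exp_ne_zero _

lemma hz4 : z ^ 4 = -1 := by
  rw [← Complex.exp_nat_mul]
  norm_num
  rw [show (4:ℂ) * ((Real.pi : ℂ) * I / 4) = Real.pi * I by ring, Complex.exp_pi_mul_I]

lemma hz2_ne_one : z ^ 2 ≠ 1 := by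
  intro h
  have : z ^ 4 = 1 := by rw [show (4:ℕ) = 2*2 from rfl, pow_mul, h]; norm_num
  rw [hz4] at this; norm_num at this

lemma hz2_ne_neg_one : z ^ 2 ≠ -1 := by
  intro h
  have : z ^ 4 = 1 := by rw [show (4:ℕ) = 2*2 from rfl, pow_mul, h]; norm_num
  rw [hz4] at this; norm_num at this

lemma detA : A.det = 1 := by
  simp [Matrix.det_fin_two_of, mul_inv_cancel₀ hz]

lemma detB : B.det = 1 := by
  simp [Matrix.det_fin_two_of, inv_mul_cancel₀ hz]

lemma rel : A * A * (B * B) = 1 := by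
  ext i j
  fin_cases i <;> fin_cases j <;>
    simp [Matrix.mul_apply, Fin.sum_univ_two, mul_inv_cancel₀ hz, inv_mul_cancel₀ hz,
      Matrix.one_apply] <;> field_simp

end S11
end

noncomputable section
namespace S11

def f : Fin 2 → Matrix.SpecialLinearGroup (Fin 2) ℂ :=
  ![⟨A, detA⟩, ⟨B, detB⟩]

lemma hrel : ∀ r ∈ ({FreeGroup.of 0 ^ 2 * FreeGroup.of 1 ^ 2} : Set (FreeGroup (Fin 2))),
    FreeGroup.lift f r = 1 := by
  intro r hr
  rcases hr with rfl
  simp only [_root_.map_mul, _root_.map_pow, FreeGroup.lift_apply_of]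
  apply Subtype.ext
  show ((f 0 : Matrix (Fin 2) (Fin 2) ℂ) ^ 2 * (f 1 : Matrix (Fin 2) (Fin 2) ℂ) ^ 2) = 1
  simp only [f, Matrix.cons_val_zero, Matrix.cons_val_one, Matrix.head_cons, pow_two]
  exact rel

end S11
end

noncomputable section
namespace S11

lemma anti_kernel (ξ : Matrix (Fin 2) (Fin 2) ℂ) (ht : ξ.trace = 0)
    (h1 : A * ξ = -(ξ * A)) : ξ = 0 := by
  have hz2 := hz2_ne_neg_one
  have e00 : z * ξ 0 0 = -(ξ 0 0 * z) := by
    have := congrFun (congrFun h1 0) 0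
    simpa [Matrix.mul_apply, Fin.sum_univ_two] using this
  have e01 : z * ξ 0 1 = -(ξ 0 1 * z⁻¹) := by
    have := congrFun (congrFun h1 0) 1
    simpa [Matrix.mul_apply, Fin.sum_univ_two] using this
  have e10 : z⁻¹ * ξ 1 0 = -(ξ 1 0 * z) := by
    have := congrFun (congrFun h1 1) 0
    simpa [Matrix.mul_apply, Fin.sum_univ_two] using this
  have h00 : ξ 0 0 = 0 := by
    have h2 : (2 * z) * ξ 0 0 = 0 := by linear_combination e00
    rcases mul_eq_zero.1 h2 with h | h
    · exact absurd h (by simp [hz])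
    · exact h
  have h01 : ξ 0 1 = 0 := by
    field_simp at e01
    have e2 : (z ^ 2 + 1) * ξ 0 1 = 0 := by linear_combination e01
    rcases mul_eq_zero.1 e2 with h | h
    · exact absurd (by linear_combination h : z ^ 2 = -1) hz2
    · exact h
  have h10 : ξ 1 0 = 0 := by
    field_simp at e10
    have e2 : (z ^ 2 + 1) * ξ 1 0 = 0 := by linear_combination e10
    rcases mul_eq_zero.1 e2 with h | h
    · exact absurd (by linear_combination h : z ^ 2 = -1) hz2
    · exact h
  have h11 : ξ 1 1 = 0 := by
    have : ξ 0 0 + ξ 1 1 = 0 := by simpa [Matrix.trace, Fin.sum_univ_two] using ht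
    linear_combination this - h00
  ext i j
  fin_cases i <;> fin_cases j <;> simp [h00, h01, h10, h11]

lemma comm_kernel (ξ : Matrix (Fin 2) (Fin 2) ℂ) (ht : ξ.trace = 0)
    (h1 : A * ξ = ξ * A) : ∃ c : ℂ, ξ = c • !![1, 0; 0, -1] := by
  have hz2 := hz2_ne_one
  have e01 : z * ξ 0 1 = ξ 0 1 * z⁻¹ := by
    have := congrFun (congrFun h1 0) 1
    simpa [Matrix.mul_apply, Fin.sum_univ_two] using this
  have e10 : z⁻¹ * ξ 1 0 = ξ 1 0 * z := by
    have := congrFun (congrFun h1 1) 0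
    simpa [Matrix.mul_apply, Fin.sum_univ_two] using this
  have h01 : ξ 0 1 = 0 := by
    field_simp at e01
    have e2 : (z ^ 2 - 1) * ξ 0 1 = 0 := by linear_combination e01
    rcases mul_eq_zero.1 e2 with h | h
    · exact absurd (by linear_combination h : z ^ 2 = 1) hz2
    · exact h
  have h10 : ξ 1 0 = 0 := by
    field_simp at e10
    have e2 : (z ^ 2 - 1) * ξ 1 0 = 0 := by linear_combination -e10
    rcases mul_eq_zero.1 e2 with h | h
    · exact absurd (by linear_combination h : z ^ 2 = 1) hz2
    · exact h
  have h11 : ξ 1 1 = -ξ 0 0 := by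
    have : ξ 0 0 + ξ 1 1 = 0 := by simpa [Matrix.trace, Fin.sum_univ_two] using ht
    linear_combination this
  refine ⟨ξ 0 0, ?_⟩
  ext i j
  fin_cases i <;> fin_cases j <;> simp [h01, h10, h11]

end S11
end



open S11 in
/-- For `Π = ⟨x₁, x₂ | x₁²x₂² = 1⟩` and `G = SL(2,ℂ)`, the assignment
`φ(x₁) = diag(ζ₈, ζ₈⁻¹)`, `φ(x₂) = diag(ζ₈⁻¹, ζ₈)` with `ζ₈ = e^{πi/4}` defines a
homomorphism `φ : Π → G`; the common kernel `⋂ ker(Ad_{φ(x_i)} + 1)` inside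
`sl(2,ℂ)` (trace-zero `ξ` with `φ(x_i) ξ = −ξ φ(x_i)`) is zero, while
`⋂ ker(Ad_{φ(x_i)} − 1)` (trace-zero `ξ` commuting with both `φ(x_i)`) is the
one-dimensional line `ℂσ₃`. -/
theorem example_H2_vanishes_H0_not :
    (∃ φ : PresentedGroup ({FreeGroup.of 0 ^ 2 * FreeGroup.of 1 ^ 2} :
          Set (FreeGroup (Fin 2))) →* Matrix.SpecialLinearGroup (Fin 2) ℂ,
      (φ (PresentedGroup.of 0) : Matrix (Fin 2) (Fin 2) ℂ)
          = !![exp ((Real.pi : ℂ) * I / 4), 0; 0, (exp ((Real.pi : ℂ) * I / 4))⁻¹] ∧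
      (φ (PresentedGroup.of 1) : Matrix (Fin 2) (Fin 2) ℂ)
          = !![(exp ((Real.pi : ℂ) * I / 4))⁻¹, 0; 0, exp ((Real.pi : ℂ) * I / 4)]) ∧
    {ξ : Matrix (Fin 2) (Fin 2) ℂ | ξ.trace = 0 ∧
        !![exp ((Real.pi : ℂ) * I / 4), 0; 0, (exp ((Real.pi : ℂ) * I / 4))⁻¹] * ξ
            = -(ξ * !![exp ((Real.pi : ℂ) * I / 4), 0; 0, (exp ((Real.pi : ℂ) * I / 4))⁻¹]) ∧
        !![(exp ((Real.pi : ℂ) * I / 4))⁻¹, 0; 0, exp ((Real.pi : ℂ) * I / 4)] * ξ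
            = -(ξ * !![(exp ((Real.pi : ℂ) * I / 4))⁻¹, 0; 0, exp ((Real.pi : ℂ) * I / 4)])} = {0} ∧
    {ξ : Matrix (Fin 2) (Fin 2) ℂ | ξ.trace = 0 ∧
        !![exp ((Real.pi : ℂ) * I / 4), 0; 0, (exp ((Real.pi : ℂ) * I / 4))⁻¹] * ξ
            = ξ * !![exp ((Real.pi : ℂ) * I / 4), 0; 0, (exp ((Real.pi : ℂ) * I / 4))⁻¹] ∧
        !![(exp ((Real.pi : ℂ) * I / 4))⁻¹, 0; 0, exp ((Real.pi : ℂ) * I / 4)] * ξ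
            = ξ * !![(exp ((Real.pi : ℂ) * I / 4))⁻¹, 0; 0, exp ((Real.pi : ℂ) * I / 4)]}
      = {ξ | ∃ c : ℂ, ξ = c • !![1, 0; 0, -1]} := by
  refine ⟨⟨PresentedGroup.toGroup hrel, ?_, ?_⟩, ?_, ?_⟩
  · rw [PresentedGroup.toGroup.of]; rfl
  · rw [PresentedGroup.toGroup.of]; rfl
  · ext ξ
    simp only [Set.mem_setOf_eq, Set.mem_singleton_iff]
    constructor
    · rintro ⟨ht, h1, -⟩
      exact anti_kernel ξ ht h1
    · rintro rfl
      refine ⟨by simp, by simp, by simp⟩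
  · ext ξ
    simp only [Set.mem_setOf_eq]
    constructor
    · rintro ⟨ht, h1, -⟩
      exact comm_kernel ξ ht h1
    · rintro ⟨c, rfl⟩
      refine ⟨?_, ?_, ?_⟩
      · simp [Matrix.trace, Fin.sum_univ_two]
      · ext i j
        fin_cases i <;> fin_cases j <;>
          simp [Matrix.mul_apply, Fin.sum_univ_two] <;> ring
      · ext i j
        fin_cases i <;> fin_cases j <;>
          simp [Matrix.mul_apply, Fin.sum_univ_two] <;> ring
end

section
/- Let Π = ⟨x₁, x₂, x₃ | x₁²x₂²x₃² = 1⟩ with φ : Π → PSL(2, ℂ) defined by φ(x₁) = ±diag(ζ₈, ζ₈⁻¹), φ(x₂) = ±diag(ζ₈⁻¹, ζ₈), φ(x₃) = ±[[0, −ζ₈],[ζ₈⁻¹, 0]]. Let Π̃ ≤ Π be the index-2 subgroup generated by all products x_i x_j (1 ≤ i, j ≤ 3). Then φ(Π̃) = H = {±I₂, ±iσ₁, ±iσ₂, ±iσ₃} ⊂ PSL(2, ℂ), and hence the centralizer of φ(Π̃) is H, a nontrivial finite group. -/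
open Complex Matrix

/-- `PSL(2,ℂ)`, the quotient of `SL(2,ℂ)` by its centre `{±I₂}`. -/
abbrev PSL2C : Type :=
  Matrix.SpecialLinearGroup (Fin 2) ℂ ⧸ Subgroup.center (Matrix.SpecialLinearGroup (Fin 2) ℂ)

/-- The subset `H = {±I₂, ±iσ₁, ±iσ₂, ±iσ₃}` of `PSL(2,ℂ)` (images of the listed
`SL(2,ℂ)` matrices). -/
def KleinSet : Set PSL2C :=
  {x | ∃ A : Matrix.SpecialLinearGroup (Fin 2) ℂ,
    QuotientGroup.mk' (Subgroup.center (Matrix.SpecialLinearGroup (Fin 2) ℂ)) A = x ∧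
    ((A : Matrix (Fin 2) (Fin 2) ℂ) ∈
      ({1, -1, I • !![0, 1; 1, 0], -(I • !![0, 1; 1, 0]),
        I • !![0, -I; I, 0], -(I • !![0, -I; I, 0]),
        I • !![1, 0; 0, -1], -(I • !![1, 0; 0, -1])} : Set (Matrix (Fin 2) (Fin 2) ℂ)))}

/-!
The products `xᵢxⱼ` generate a subgroup `Π̃` containing `xᵢ⁻¹xⱼ = (xᵢxᵢ)⁻¹(xᵢxⱼ)`, so every
element of `Π` lies in `Π̃` or in `Π̃x₁`; the parity map `Π → ℤˣ`, `xᵢ ↦ -1`, kills `Π̃` but not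
`x₁`, so the index is exactly two.

Lifting to `SL(2, ℂ)`, every product of two of the prescribed lifts of the `φ(xᵢ)` is one of
`±1, ±iσ₁, ±iσ₂, ±iσ₃`, and `φ(x₁)² = iσ₃`, `φ(x₁)φ(x₃) = -iσ₁`, with `iσ₁ iσ₃ = iσ₂`. Hence
`φ(Π̃) = H = {1, a, b, ab}` with `a, b` the images of `iσ₁, iσ₃`, which commute in `PSL(2, ℂ)`
because `iσ₁` and `iσ₃` anticommute. An element of `PSL(2, ℂ)` centralizing `H` lifts to a
determinant-one matrix `A` commuting up to sign with `iσ₁` and `iσ₃`: `A` is diagonal or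
antidiagonal, and `(A₁₁, A₁₀) = ±(A₀₀, A₀₁)`, so the determinant condition leaves only `±1, ±iσₖ`.
-/

open Subgroup
open scoped MatrixGroups

section PairProducts

variable {G ι : Type*} [Group G] (x : ι → G)

lemma mul_mem_or_mem_closure_mul_pairs (hx : closure (Set.range x) = ⊤) (i₀ : ι) (g : G) :
    g * x i₀ ∈ closure {g | ∃ i j, g = x i * x j} ∨ g ∈ closure {g | ∃ i j, g = x i * x j} := by
  set K := closure {g | ∃ i j, g = x i * x j}
  have pair_mem (i j : ι) : x i * x j ∈ K := subset_closure ⟨i, j, rfl⟩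
  have hg : g ∈ closure (Set.range x) := hx ▸ mem_top g
  induction hg using closure_induction_right with
  | one => exact Or.inr (one_mem K)
  | mul_right g _ _ hy ih =>
    obtain ⟨i, rfl⟩ := hy
    rcases ih with h | h
    · right
      have : g * x i = g * x i₀ * ((x i₀ * x i₀)⁻¹ * (x i₀ * x i)) := by group
      exact this ▸ mul_mem h (mul_mem (inv_mem (pair_mem i₀ i₀)) (pair_mem i₀ i))
    · exact Or.inl (mul_assoc g (x i) (x i₀) ▸ mul_mem h (pair_mem i i₀))
  | mul_inv_cancel g _ _ hy ih =>
    obtain ⟨i, rfl⟩ := hy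
    rcases ih with h | h
    · right
      have : g * (x i)⁻¹ = g * x i₀ * (x i * x i₀)⁻¹ := by group
      exact this ▸ mul_mem h (inv_mem (pair_mem i i₀))
    · left
      have : g * (x i)⁻¹ * x i₀ = g * ((x i * x i)⁻¹ * (x i * x i₀)) := by group
      exact this ▸ mul_mem h (mul_mem (inv_mem (pair_mem i i)) (pair_mem i i₀))

lemma index_closure_mul_pairs_eq_two (hx : closure (Set.range x) = ⊤) {i₀ : ι}
    (hi₀ : x i₀ ∉ closure {g | ∃ i j, g = x i * x j}) :
    (closure {g | ∃ i j, g = x i * x j}).index = 2 := by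
  refine index_eq_two_iff.mpr ⟨x i₀, fun g => (xor_iff_or_and_not_and _ _).mpr
    ⟨mul_mem_or_mem_closure_mul_pairs x hx i₀ g, fun ⟨hgx, hg⟩ => hi₀ ?_⟩⟩
  simpa using mul_mem (inv_mem hg) hgx

lemma notMem_closure_mul_pairs_of_map_eq_neg_one (ψ : G →* ℤˣ) (hψ : ∀ i, ψ (x i) = -1)
    (i₀ : ι) : x i₀ ∉ closure {g | ∃ i j, g = x i * x j} := by
  have hle : closure {g | ∃ i j, g = x i * x j} ≤ ψ.ker := by
    rw [closure_le]
    rintro _ ⟨i, j, rfl⟩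
    simp [hψ]
  intro h
  simpa [hψ] using hle h

end PairProducts

section KleinFour

variable {G : Type*} [Group G] {a b : G}

lemma subset_centralizer_klein_four (hab : Commute a b) :
    ({1, a, b, a * b} : Set G) ⊆ centralizer {1, a, b, a * b} := by
  intro x hx
  rw [SetLike.mem_coe, mem_centralizer_iff]
  intro y hy
  simp only [Set.mem_insert_iff, Set.mem_singleton_iff] at hx hy
  rcases hx with rfl | rfl | rfl | rfl <;> rcases hy with rfl | rfl | rfl | rfl <;>
    simp [mul_assoc, hab.eq, hab.left_comm]

end KleinFour

noncomputable abbrev toPSL : SL(2, ℂ) →* PSL2C := QuotientGroup.mk' (center SL(2, ℂ))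

lemma mem_center_SL2_iff {A : SL(2, ℂ)} : A ∈ center SL(2, ℂ) ↔ A = 1 ∨ A = -1 := by
  rw [Matrix.SpecialLinearGroup.mem_center_iff, Fintype.card_fin]
  constructor
  · rintro ⟨r, hr, hA⟩
    rcases mul_self_eq_one_iff.mp (pow_two r ▸ hr) with rfl | rfl
    · exact Or.inl (Subtype.ext (by simp [← hA]))
    · exact Or.inr (Subtype.ext (by ext i j; fin_cases i <;> fin_cases j <;> simp [← hA]))
  · rintro (rfl | rfl)
    · exact ⟨1, by simp, by ext; simp⟩
    · exact ⟨-1, by simp, by ext i j; fin_cases i <;> fin_cases j <;> simp⟩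

lemma toPSL_eq_toPSL_iff {A B : SL(2, ℂ)} : toPSL A = toPSL B ↔ B = A ∨ B = -A := by
  rw [QuotientGroup.mk'_eq_mk']
  constructor
  · rintro ⟨z, hz, rfl⟩
    rcases mem_center_SL2_iff.mp hz with rfl | rfl <;> simp
  · rintro (rfl | rfl)
    · exact ⟨1, one_mem _, mul_one _⟩
    · exact ⟨-1, mem_center_SL2_iff.mpr (Or.inr rfl), by simp⟩

lemma toPSL_neg (A : SL(2, ℂ)) : toPSL (-A) = toPSL A :=
  toPSL_eq_toPSL_iff.mpr (Or.inr (neg_neg A).symm)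

lemma commute_toPSL_iff {A B : SL(2, ℂ)} :
    Commute (toPSL A) (toPSL B) ↔ B * A = A * B ∨ B * A = -(A * B) := by
  rw [Commute, SemiconjBy, ← map_mul, ← map_mul, toPSL_eq_toPSL_iff]

def iσ₁ : SL(2, ℂ) := ⟨I • !![0, 1; 1, 0], by simp [det_fin_two_of]⟩
def iσ₂ : SL(2, ℂ) := ⟨I • !![0, -I; I, 0], by simp [det_fin_two_of]⟩
def iσ₃ : SL(2, ℂ) := ⟨I • !![1, 0; 0, -1], by simp [det_fin_two_of]⟩

lemma iσ₁_mul_iσ₃ : iσ₁ * iσ₃ = iσ₂ := by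
  refine Subtype.ext ?_
  simp only [Matrix.SpecialLinearGroup.coe_mul]
  simp [iσ₁, iσ₂, iσ₃]

lemma iσ₃_mul_iσ₁ : iσ₃ * iσ₁ = -iσ₂ := by
  refine Subtype.ext ?_
  simp only [Matrix.SpecialLinearGroup.coe_mul, Matrix.SpecialLinearGroup.coe_neg]
  simp [iσ₁, iσ₂, iσ₃]

def quaternionUnits : Set SL(2, ℂ) := {1, -1, iσ₁, -iσ₁, iσ₂, -iσ₂, iσ₃, -iσ₃}

lemma kleinSet_eq_image : KleinSet = toPSL '' quaternionUnits := by
  ext x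
  refine exists_congr fun A => and_comm.trans (and_congr_left' ?_)
  simp only [quaternionUnits, Set.mem_insert_iff, Set.mem_singleton_iff,
    ← Matrix.SpecialLinearGroup.coeMonoidHom_injective.eq_iff]
  rfl

lemma kleinSet_eq : KleinSet = {1, toPSL iσ₁, toPSL iσ₃, toPSL iσ₁ * toPSL iσ₃} := by
  rw [kleinSet_eq_image, ← map_mul, iσ₁_mul_iσ₃]
  simp only [quaternionUnits, Set.image_insert_eq, Set.image_singleton, toPSL_neg, map_one,
    Set.insert_idem, Set.pair_eq_singleton]
  rw [Set.pair_comm]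

lemma commute_toPSL_iσ₁_iσ₃ : Commute (toPSL iσ₁) (toPSL iσ₃) :=
  commute_toPSL_iff.mpr (Or.inr (by rw [iσ₁_mul_iσ₃, iσ₃_mul_iσ₁]))

lemma toPSL_iσ₁_ne_one : toPSL iσ₁ ≠ 1 := by
  rw [Ne, ← map_one toPSL, toPSL_eq_toPSL_iff]
  simp only [Matrix.SpecialLinearGroup.ext_iff, Fin.forall_fin_two,
    Matrix.SpecialLinearGroup.coe_neg]
  simp [iσ₁]

section Entries

variable {A : SL(2, ℂ)}

lemma diagonal_or_antidiagonal_of_commute_iσ₃ (h : A * iσ₃ = iσ₃ * A ∨ A * iσ₃ = -(iσ₃ * A)) :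
    (A 0 1 = 0 ∧ A 1 0 = 0) ∨ (A 0 0 = 0 ∧ A 1 1 = 0) := by
  simp only [Matrix.SpecialLinearGroup.ext_iff, Fin.forall_fin_two,
    Matrix.SpecialLinearGroup.coe_mul, Matrix.SpecialLinearGroup.coe_neg] at h
  simpa [iσ₃, mul_apply, Fin.sum_univ_two, vecMul, dotProduct, mul_comm _ I, neg_eq_self,
    self_eq_neg] using h

lemma entries_eq_or_eq_neg_of_commute_iσ₁ (h : A * iσ₁ = iσ₁ * A ∨ A * iσ₁ = -(iσ₁ * A)) :
    (A 1 1 = A 0 0 ∧ A 1 0 = A 0 1) ∨ (A 1 1 = -A 0 0 ∧ A 1 0 = -A 0 1) := by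
  have hrow := h.imp (congrArg fun M : SL(2, ℂ) => (M 1 0, M 1 1))
    (congrArg fun M : SL(2, ℂ) => (M 1 0, M 1 1))
  simp only [Matrix.SpecialLinearGroup.coe_mul, Matrix.SpecialLinearGroup.coe_neg] at hrow
  simpa [iσ₁, Prod.ext_iff, mul_apply, Fin.sum_univ_two, vecMul, dotProduct, mul_comm _ I,
    ← mul_neg, mul_right_inj' I_ne_zero] using hrow

lemma mem_quaternionUnits_of_commute (h₁ : A * iσ₁ = iσ₁ * A ∨ A * iσ₁ = -(iσ₁ * A))
    (h₃ : A * iσ₃ = iσ₃ * A ∨ A * iσ₃ = -(iσ₃ * A)) : A ∈ quaternionUnits := by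
  have hdet : A 0 0 * A 1 1 - A 0 1 * A 1 0 = 1 := by rw [← det_fin_two]; exact A.2
  have h₁' := entries_eq_or_eq_neg_of_commute_iσ₁ h₁
  have h₃' := diagonal_or_antidiagonal_of_commute_iσ₃ h₃
  simp only [quaternionUnits, Set.mem_insert_iff, Set.mem_singleton_iff,
    Matrix.SpecialLinearGroup.ext_iff, Fin.forall_fin_two, Matrix.SpecialLinearGroup.coe_neg]
  generalize A 0 0 = a, A 0 1 = b, A 1 0 = c, A 1 1 = d at *
  rcases h₁' with ⟨hd, hc⟩ | ⟨hd, hc⟩ <;> subst c d <;> rcases h₃' with ⟨rfl, -⟩ | ⟨rfl, -⟩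
  · rcases mul_self_eq_one_iff.mp (by linear_combination hdet) with rfl | rfl <;>
      simp [iσ₁, iσ₂, iσ₃]
  · rcases mul_self_eq_mul_self_iff.mp (by linear_combination -hdet - I_sq : b * b = I * I)
      with rfl | rfl <;> simp [iσ₁, iσ₂, iσ₃]
  · rcases mul_self_eq_mul_self_iff.mp (by linear_combination -hdet - I_sq : a * a = I * I)
      with rfl | rfl <;> simp [iσ₁, iσ₂, iσ₃]
  · rcases mul_self_eq_one_iff.mp (by linear_combination hdet) with rfl | rfl <;>
      simp [iσ₁, iσ₂, iσ₃]

end Entries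

lemma centralizer_kleinSet : (centralizer KleinSet : Set PSL2C) = KleinSet := by
  refine Set.Subset.antisymm (fun x hx => ?_) ?_
  · obtain ⟨A, rfl⟩ := QuotientGroup.mk'_surjective _ x
    rw [kleinSet_eq, SetLike.mem_coe, mem_centralizer_iff] at hx
    have h₁ := commute_toPSL_iff.mp (hx (toPSL iσ₁) (by simp))
    have h₃ := commute_toPSL_iff.mp (hx (toPSL iσ₃) (by simp))
    rw [kleinSet_eq_image]
    exact ⟨A, mem_quaternionUnits_of_commute h₁ h₃, rfl⟩
  · rw [kleinSet_eq]
    exact subset_centralizer_klein_four commute_toPSL_iσ₁_iσ₃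

local notation "ζ₈" => exp ((Real.pi : ℂ) * I / 4)

lemma ζ₈_mul_self : ζ₈ * ζ₈ = I := by
  rw [← exp_add]
  convert exp_pi_div_two_mul_I using 2
  ring

lemma inv_ζ₈_mul_self : ζ₈⁻¹ * ζ₈⁻¹ = -I := by
  rw [← mul_inv, ζ₈_mul_self, inv_I]

-- The lifts of `φ(x₁), φ(x₂), φ(x₃)` prescribed in the statement, indexed from `0`.
noncomputable def liftMatrix : Fin 3 → Matrix (Fin 2) (Fin 2) ℂ :=
  ![!![ζ₈, 0; 0, ζ₈⁻¹], !![ζ₈⁻¹, 0; 0, ζ₈], !![0, -ζ₈; ζ₈⁻¹, 0]]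

section Lifts

variable {A B : SL(2, ℂ)}

lemma mul_mem_quaternionUnits_of_coe_eq_liftMatrix {i j : Fin 3}
    (hA : (A : Matrix _ _ ℂ) = liftMatrix i) (hB : (B : Matrix _ _ ℂ) = liftMatrix j) : A * B ∈ quaternionUnits := by
  have hζ : ζ₈ ≠ 0 := exp_ne_zero _
  simp only [quaternionUnits, Set.mem_insert_iff, Set.mem_singleton_iff,
    Matrix.SpecialLinearGroup.ext_iff, Fin.forall_fin_two, Matrix.SpecialLinearGroup.coe_mul,
    Matrix.SpecialLinearGroup.coe_neg, hA, hB]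
  fin_cases i <;> fin_cases j <;>
    simp [liftMatrix, iσ₁, iσ₂, iσ₃, mul_apply, Fin.sum_univ_two, ζ₈_mul_self, inv_ζ₈_mul_self, hζ]

lemma mul_eq_iσ₃_of_coe_eq_liftMatrix (hA : (A : Matrix _ _ ℂ) = liftMatrix 0) :
    A * A = iσ₃ := by
  refine Subtype.ext ?_
  simp only [Matrix.SpecialLinearGroup.coe_mul, hA]
  simp [liftMatrix, iσ₃, ζ₈_mul_self, inv_ζ₈_mul_self]

lemma mul_eq_neg_iσ₁_of_coe_eq_liftMatrix (hA : (A : Matrix _ _ ℂ) = liftMatrix 0)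
    (hB : (B : Matrix _ _ ℂ) = liftMatrix 2) : A * B = -iσ₁ := by
  refine Subtype.ext ?_
  simp only [Matrix.SpecialLinearGroup.coe_mul, Matrix.SpecialLinearGroup.coe_neg, hA, hB]
  simp [liftMatrix, iσ₁, ζ₈_mul_self, inv_ζ₈_mul_self]

end Lifts

lemma map_closure_mul_pairs_eq_kleinSet {G : Type*} [Group G] (x : Fin 3 → G) (φ : G →* PSL2C)
    (hφ : ∀ i, ∃ A : SL(2, ℂ), toPSL A = φ (x i) ∧ (A : Matrix _ _ ℂ) = liftMatrix i) :
    ((closure {g | ∃ i j, g = x i * x j}).map φ : Set PSL2C) = KleinSet := by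
  choose A hAφ hA using hφ
  have map_pair (i j : Fin 3) : φ (x i * x j) = toPSL (A i * A j) := by
    rw [map_mul, map_mul, hAφ, hAφ]
  refine Set.Subset.antisymm ?_ ?_
  -- `KleinSet` is a subgroup, being its own centralizer.
  · rw [← centralizer_kleinSet, SetLike.coe_subset_coe, MonoidHom.map_closure, closure_le,
      centralizer_kleinSet, kleinSet_eq_image]
    rintro _ ⟨_, ⟨i, j, rfl⟩, rfl⟩
    exact ⟨A i * A j, mul_mem_quaternionUnits_of_coe_eq_liftMatrix (hA i) (hA j),
      (map_pair i j).symm⟩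
  · have hσ₁ : toPSL iσ₁ ∈ (closure {g | ∃ i j, g = x i * x j}).map φ :=
      ⟨x 0 * x 2, subset_closure ⟨0, 2, rfl⟩, by
        rw [map_pair, mul_eq_neg_iσ₁_of_coe_eq_liftMatrix (hA 0) (hA 2), toPSL_neg]⟩
    have hσ₃ : toPSL iσ₃ ∈ (closure {g | ∃ i j, g = x i * x j}).map φ :=
      ⟨x 0 * x 0, subset_closure ⟨0, 0, rfl⟩, by
        rw [map_pair, mul_eq_iσ₃_of_coe_eq_liftMatrix (hA 0)]⟩
    rw [kleinSet_eq]
    simp only [Set.insert_subset_iff, Set.singleton_subset_iff, SetLike.mem_coe]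
    exact ⟨one_mem _, hσ₁, hσ₃, mul_mem hσ₁ hσ₃⟩

def parity : PresentedGroup ({FreeGroup.of 0 ^ 2 * FreeGroup.of 1 ^ 2 * FreeGroup.of 2 ^ 2} :
    Set (FreeGroup (Fin 3))) →* ℤˣ :=
  PresentedGroup.toGroup (f := fun _ => -1) (by simp)

/-- Let `Π = ⟨x₁, x₂, x₃ | x₁²x₂²x₃² = 1⟩`, with
`φ : Π → PSL(2,ℂ)` given by `φ(x₁) = ±diag(ζ₈, ζ₈⁻¹)`, `φ(x₂) = ±diag(ζ₈⁻¹, ζ₈)`,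
`φ(x₃) = ±[[0, −ζ₈],[ζ₈⁻¹, 0]]`, and let `Π̃` be the index-2 subgroup of `Π`
generated by the products `x_i x_j`.  Then `φ(Π̃) = H = {±I₂, ±iσ₁, ±iσ₂, ±iσ₃}`,
and hence the centralizer of `φ(Π̃)` is `H`, a nontrivial finite group. -/
theorem restriction_to_index_two_subgroup_has_Klein_stabilizer
    (φ : PresentedGroup
        ({FreeGroup.of 0 ^ 2 * FreeGroup.of 1 ^ 2 * FreeGroup.of 2 ^ 2} :
          Set (FreeGroup (Fin 3))) →* PSL2C)
    (h1 : ∃ A : Matrix.SpecialLinearGroup (Fin 2) ℂ,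
        QuotientGroup.mk' _ A = φ (PresentedGroup.of 0) ∧
        (A : Matrix (Fin 2) (Fin 2) ℂ)
          = !![exp ((Real.pi : ℂ) * I / 4), 0; 0, (exp ((Real.pi : ℂ) * I / 4))⁻¹])
    (h2 : ∃ A : Matrix.SpecialLinearGroup (Fin 2) ℂ,
        QuotientGroup.mk' _ A = φ (PresentedGroup.of 1) ∧
        (A : Matrix (Fin 2) (Fin 2) ℂ)
          = !![(exp ((Real.pi : ℂ) * I / 4))⁻¹, 0; 0, exp ((Real.pi : ℂ) * I / 4)])
    (h3 : ∃ A : Matrix.SpecialLinearGroup (Fin 2) ℂ,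
        QuotientGroup.mk' _ A = φ (PresentedGroup.of 2) ∧
        (A : Matrix (Fin 2) (Fin 2) ℂ)
          = !![0, -exp ((Real.pi : ℂ) * I / 4); (exp ((Real.pi : ℂ) * I / 4))⁻¹, 0]) :
    (Subgroup.closure
        {w : PresentedGroup
          ({FreeGroup.of 0 ^ 2 * FreeGroup.of 1 ^ 2 * FreeGroup.of 2 ^ 2} :
            Set (FreeGroup (Fin 3))) |
          ∃ i j : Fin 3, w = PresentedGroup.of i * PresentedGroup.of j}).index = 2 ∧
    ((Subgroup.closure
        {w : PresentedGroup
          ({FreeGroup.of 0 ^ 2 * FreeGroup.of 1 ^ 2 * FreeGroup.of 2 ^ 2} :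
            Set (FreeGroup (Fin 3))) |
          ∃ i j : Fin 3, w = PresentedGroup.of i * PresentedGroup.of j}).map φ :
      Set PSL2C) = KleinSet ∧
    (Subgroup.centralizer KleinSet : Set PSL2C) = KleinSet ∧
    KleinSet ≠ {1} ∧ KleinSet.Finite := by
  have hφ (i : Fin 3) : ∃ A : SL(2, ℂ), toPSL A = φ (PresentedGroup.of i) ∧
      (A : Matrix _ _ ℂ) = liftMatrix i := by
    fin_cases i
    exacts [h1, h2, h3]
  refine ⟨index_closure_mul_pairs_eq_two _ (PresentedGroup.closure_range_of _)
      (notMem_closure_mul_pairs_of_map_eq_neg_one _ parity (fun _ => rfl) 0),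
    map_closure_mul_pairs_eq_kleinSet _ φ hφ, centralizer_kleinSet, ?_, ?_⟩
  · rw [kleinSet_eq]
    exact fun h => toPSL_iσ₁_ne_one (Set.eq_singleton_iff_unique_mem.mp h |>.2 _ (by simp))
  · rw [kleinSet_eq]
    exact Set.toFinite _
end

section
/- Let Π = ⟨x₁, x₋₁, x₂, x₋₂ | x₁²x₋₁²x₂²x₋₂² = 1⟩ and G = SL(2, ℂ). For t ∈ ℝ, define φ_t by φ_t(x_{±1}) = ±iσ₁ and φ_t(x_{±2}) = cos(πt)I₂ ± i sin(πt)σ₂. Then each φ_t is a well-defined homomorphism; moreover ⋂_j ker(Ad_{φ_t(x_j)} − 1) equals ℂσ₁ if t ∈ ℤ and 0 if sin(πt) ≠ 0, and ⋂_j ker(Ad_{φ_t(x_j)} + 1) equals ℂσ₃ if t ∈ 1/2 + ℤ and 0 if cos(πt) ≠ 0. -/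
open Complex Matrix

/-- The four matrices `φ_t(x₁) = iσ₁`, `φ_t(x₋₁) = −iσ₁`,
`φ_t(x₂) = cos(πt)I₂ + i sin(πt)σ₂`, `φ_t(x₋₂) = cos(πt)I₂ − i sin(πt)σ₂`. -/
noncomputable def phiMat (t : ℝ) : Fin 4 → Matrix (Fin 2) (Fin 2) ℂ
  | 0 => I • !![0, 1; 1, 0]
  | 1 => -(I • !![0, 1; 1, 0])
  | 2 => (Real.cos (Real.pi * t) : ℂ) • 1 + (I * (Real.sin (Real.pi * t) : ℂ)) • !![0, -I; I, 0]
  | 3 => (Real.cos (Real.pi * t) : ℂ) • 1 - (I * (Real.sin (Real.pi * t) : ℂ)) • !![0, -I; I, 0]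

lemma phiMat0 (t : ℝ) : phiMat t 0 = !![0, I; I, 0] := by
  show I • !![0, 1; 1, 0] = _
  ext i j; fin_cases i <;> fin_cases j <;> simp

lemma phiMat1 (t : ℝ) : phiMat t 1 = !![0, -I; -I, 0] := by
  show -(I • !![0, 1; 1, 0]) = _
  ext i j; fin_cases i <;> fin_cases j <;> simp

lemma phiMat2 (t : ℝ) : phiMat t 2 =
    !![(Real.cos (Real.pi*t):ℂ), (Real.sin (Real.pi*t):ℂ);
       -(Real.sin (Real.pi*t):ℂ), (Real.cos (Real.pi*t):ℂ)] := by
  show (Real.cos (Real.pi * t) : ℂ) • 1 + (I * (Real.sin (Real.pi * t) : ℂ)) • !![0, -I; I, 0] = _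
  ext i j
  fin_cases i <;> fin_cases j <;> simp [Matrix.one_fin_two] <;> ring_nf <;> simp [Complex.I_sq]

lemma phiMat3 (t : ℝ) : phiMat t 3 =
    !![(Real.cos (Real.pi*t):ℂ), -(Real.sin (Real.pi*t):ℂ);
       (Real.sin (Real.pi*t):ℂ), (Real.cos (Real.pi*t):ℂ)] := by
  show (Real.cos (Real.pi * t) : ℂ) • 1 - (I * (Real.sin (Real.pi * t) : ℂ)) • !![0, -I; I, 0] = _
  ext i j
  fin_cases i <;> fin_cases j <;> simp [Matrix.one_fin_two] <;> ring_nf <;> simp [Complex.I_sq]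


lemma csc (t : ℝ) : (Real.cos (Real.pi*t):ℂ)^2 + (Real.sin (Real.pi*t):ℂ)^2 = 1 := by
  have := Real.cos_sq_add_sin_sq (Real.pi * t)
  exact_mod_cast congrArg (Complex.ofReal) this

lemma phiMatdet (t : ℝ) (j : Fin 4) : (phiMat t j).det = 1 := by
  have h0 : (phiMat t 0).det = 1 := by rw [phiMat0]; simp [Matrix.det_fin_two_of, Complex.I_mul_I]
  have h1 : (phiMat t 1).det = 1 := by rw [phiMat1]; simp [Matrix.det_fin_two_of, Complex.I_mul_I]
  have h2 : (phiMat t 2).det = 1 := by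
    rw [phiMat2]; rw [Matrix.det_fin_two_of]; linear_combination csc t
  have h3 : (phiMat t 3).det = 1 := by
    rw [phiMat3]; rw [Matrix.det_fin_two_of]; linear_combination csc t
  fin_cases j <;> assumption

lemma phiMat23 (t : ℝ) : phiMat t 2 * phiMat t 3 = 1 := by
  rw [phiMat2, phiMat3]
  ext i j
  rw [Matrix.mul_apply]
  fin_cases i <;> fin_cases j <;>
    simp [Fin.sum_univ_two, Matrix.one_fin_two, -Complex.ofReal_cos, -Complex.ofReal_sin] <;> first | linear_combination csc t | linear_combination -csc t | ring

lemma phiMat0sq (t : ℝ) : phiMat t 0 * phiMat t 0 = -1 := by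
  rw [phiMat0]; ext i j; rw [Matrix.mul_apply]
  fin_cases i <;> fin_cases j <;>
    simp [Fin.sum_univ_two, Matrix.one_fin_two, Complex.I_mul_I]

lemma phiMat1sq (t : ℝ) : phiMat t 1 * phiMat t 1 = -1 := by
  rw [phiMat1]; ext i j; rw [Matrix.mul_apply]
  fin_cases i <;> fin_cases j <;>
    simp [Fin.sum_univ_two, Matrix.one_fin_two, Complex.I_mul_I]

lemma relprod (t : ℝ) :
    phiMat t 0 ^ 2 * phiMat t 1 ^ 2 * phiMat t 2 ^ 2 * phiMat t 3 ^ 2 = 1 := by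
  have h23 : phiMat t 2 ^ 2 * phiMat t 3 ^ 2 = 1 := by
    have : phiMat t 2 ^ 2 * phiMat t 3 ^ 2
        = phiMat t 2 * (phiMat t 2 * phiMat t 3) * phiMat t 3 := by noncomm_ring
    rw [this, phiMat23 t, mul_one, phiMat23 t]
  calc phiMat t 0 ^ 2 * phiMat t 1 ^ 2 * phiMat t 2 ^ 2 * phiMat t 3 ^ 2
      = (phiMat t 0 * phiMat t 0) * (phiMat t 1 * phiMat t 1) * (phiMat t 2 ^ 2 * phiMat t 3 ^ 2) := by noncomm_ring
    _ = 1 := by rw [phiMat0sq, phiMat1sq, h23]; simp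

section helpers
variable (t : ℝ) (ξ : Matrix (Fin 2) (Fin 2) ℂ)

-- commuting with iσ₁ forces off-diagonal equal, diagonal zero (with trace)
lemma comm_sigma1 (htr : ξ.trace = 0)
    (h0 : !![0, I; I, 0] * ξ = ξ * !![0, I; I, 0]) :
    ξ 0 0 = 0 ∧ ξ 1 1 = 0 ∧ ξ 1 0 = ξ 0 1 := by
  rw [Matrix.trace_fin_two] at htr
  have e00 := congrFun (congrFun h0 0) 0
  have e01 := congrFun (congrFun h0 0) 1
  simp [Matrix.mul_apply, Fin.sum_univ_two] at e00 e01
  have f00 : ξ 1 0 = ξ 0 1 := mul_left_cancel₀ I_ne_zero (by rw [e00]; ring)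
  have f01 : ξ 1 1 = ξ 0 0 := mul_left_cancel₀ I_ne_zero (by rw [e01]; ring)
  exact ⟨by linear_combination (htr - f01)/2, by linear_combination (htr + f01)/2, f00⟩

lemma anti_sigma1
    (h0 : !![0, I; I, 0] * ξ = -(ξ * !![0, I; I, 0])) :
    ξ 1 0 = -ξ 0 1 ∧ ξ 1 1 = -ξ 0 0 := by
  have e00 := congrFun (congrFun h0 0) 0
  have e01 := congrFun (congrFun h0 0) 1
  simp [Matrix.mul_apply, Fin.sum_univ_two] at e00 e01
  exact ⟨mul_left_cancel₀ I_ne_zero (by rw [e00]; ring),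
    mul_left_cancel₀ I_ne_zero (by rw [e01]; ring)⟩

end helpers


lemma all_four (t : ℝ) (P : Matrix (Fin 2) (Fin 2) ℂ → Prop)
    (h0 : P (phiMat t 0)) (h1 : P (phiMat t 1)) (h2 : P (phiMat t 2))
    (h3 : P (phiMat t 3)) : ∀ j : Fin 4, P (phiMat t j) := by
  intro j; fin_cases j <;> assumption


section prongs
variable (t : ℝ)

lemma prong2 (hsin : (Real.sin (Real.pi * t) : ℂ) = 0) :
    {ξ : Matrix (Fin 2) (Fin 2) ℂ | ξ.trace = 0 ∧
        ∀ j : Fin 4, phiMat t j * ξ = ξ * phiMat t j}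
      = {ξ | ∃ c : ℂ, ξ = c • !![0, 1; 1, 0]} := by
  ext ξ
  simp only [Set.mem_setOf_eq]
  constructor
  · rintro ⟨htr, hc⟩
    have h0 := hc 0; rw [phiMat0] at h0
    obtain ⟨f0, f1, f2⟩ := comm_sigma1 ξ htr h0
    refine ⟨ξ 0 1, ?_⟩
    ext i j
    fin_cases i <;> fin_cases j <;> simp [f0, f1, f2]
  · rintro ⟨c, rfl⟩
    refine ⟨by simp [Matrix.trace_fin_two],
      all_four _ (fun A => A * c • !![0, 1; 1, 0] = c • !![0, 1; 1, 0] * A) ?_ ?_ ?_ ?_⟩ <;>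
      [rw [phiMat0]; rw [phiMat1]; rw [phiMat2]; rw [phiMat3]] <;>
    · ext i k
      rw [Matrix.mul_apply, Matrix.mul_apply]
      fin_cases i <;> fin_cases k <;>
        simp [Fin.sum_univ_two, hsin, -Complex.ofReal_cos, -Complex.ofReal_sin] <;> ring

lemma prong3 (hS : (Real.sin (Real.pi * t) : ℂ) ≠ 0) :
    {ξ : Matrix (Fin 2) (Fin 2) ℂ | ξ.trace = 0 ∧
        ∀ j : Fin 4, phiMat t j * ξ = ξ * phiMat t j} = {0} := by
  ext ξ
  simp only [Set.mem_setOf_eq, Set.mem_singleton_iff]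
  constructor
  · rintro ⟨htr, hc⟩
    have h0 := hc 0; rw [phiMat0] at h0
    obtain ⟨f0, f1, f2⟩ := comm_sigma1 ξ htr h0
    have h2 := hc 2; rw [phiMat2] at h2
    have e00 := congrFun (congrFun h2 0) 0
    simp [Matrix.mul_apply, Fin.sum_univ_two, -Complex.ofReal_cos, -Complex.ofReal_sin] at e00
    have f3 : ξ 0 1 = 0 := by
      have h2S : (2 : ℂ) * (Real.sin (Real.pi * t) : ℂ) ≠ 0 := mul_ne_zero two_ne_zero hS
      apply mul_left_cancel₀ h2S
      rw [mul_zero]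
      linear_combination e00 - (Real.sin (Real.pi * t) : ℂ) * f2
    ext i j
    fin_cases i <;> fin_cases j <;> simp [f0, f1, f3, f2.trans f3]
  · rintro rfl
    exact ⟨by simp, fun j => by simp⟩

lemma prong4 (hcos : (Real.cos (Real.pi * t) : ℂ) = 0)
    (hsin : (Real.sin (Real.pi * t) : ℂ) ≠ 0) :
    {ξ : Matrix (Fin 2) (Fin 2) ℂ | ξ.trace = 0 ∧
        ∀ j : Fin 4, phiMat t j * ξ = -(ξ * phiMat t j)}
      = {ξ | ∃ c : ℂ, ξ = c • !![1, 0; 0, -1]} := by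
  ext ξ
  simp only [Set.mem_setOf_eq]
  constructor
  · rintro ⟨htr, hc⟩
    have h0 := hc 0; rw [phiMat0] at h0
    obtain ⟨g0, g1⟩ := anti_sigma1 ξ h0
    have h2 := hc 2; rw [phiMat2] at h2
    have e00 := congrFun (congrFun h2 0) 0
    simp [Matrix.mul_apply, Fin.sum_univ_two, -Complex.ofReal_cos, -Complex.ofReal_sin] at e00
    have f3 : ξ 0 1 = 0 := by
      have h2S : (2 : ℂ) * (Real.sin (Real.pi * t) : ℂ) ≠ 0 := mul_ne_zero two_ne_zero hsin
      apply mul_left_cancel₀ h2S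
      rw [mul_zero]
      linear_combination -e00 + (2 * ξ 0 0) * hcos + (Real.sin (Real.pi * t) : ℂ) * g0
    refine ⟨ξ 0 0, ?_⟩
    ext i j
    fin_cases i <;> fin_cases j <;> simp [f3, g1, g0.trans (by rw [f3, neg_zero])] <;> ring
  · rintro ⟨c, rfl⟩
    refine ⟨by simp [Matrix.trace_fin_two],
      all_four _ (fun A => A * c • !![1, 0; 0, -1] = -(c • !![1, 0; 0, -1] * A)) ?_ ?_ ?_ ?_⟩ <;>
      [rw [phiMat0]; rw [phiMat1]; rw [phiMat2]; rw [phiMat3]] <;>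
    · ext i k
      rw [Matrix.mul_apply, Matrix.neg_apply, Matrix.mul_apply]
      fin_cases i <;> fin_cases k <;>
        simp [Fin.sum_univ_two, hcos, -Complex.ofReal_cos, -Complex.ofReal_sin] <;> ring

lemma prong5 (hC : (Real.cos (Real.pi * t) : ℂ) ≠ 0) :
    {ξ : Matrix (Fin 2) (Fin 2) ℂ | ξ.trace = 0 ∧
        ∀ j : Fin 4, phiMat t j * ξ = -(ξ * phiMat t j)} = {0} := by
  ext ξ
  simp only [Set.mem_setOf_eq, Set.mem_singleton_iff]
  constructor
  · rintro ⟨htr, hc⟩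
    have h0 := hc 0; rw [phiMat0] at h0
    obtain ⟨g0, g1⟩ := anti_sigma1 ξ h0
    have h2 := hc 2; rw [phiMat2] at h2
    have e00 := congrFun (congrFun h2 0) 0
    have e01 := congrFun (congrFun h2 0) 1
    simp [Matrix.mul_apply, Fin.sum_univ_two, -Complex.ofReal_cos, -Complex.ofReal_sin]
      at e00 e01
    have h2C : (2 : ℂ) * (Real.cos (Real.pi * t) : ℂ) ≠ 0 := mul_ne_zero two_ne_zero hC
    have f3 : ξ 0 1 = 0 := by
      apply mul_left_cancel₀ h2C
      rw [mul_zero]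
      linear_combination e01 - (Real.sin (Real.pi * t) : ℂ) * g1
    have f4 : ξ 0 0 = 0 := by
      apply mul_left_cancel₀ h2C
      rw [mul_zero]
      linear_combination e00 - (Real.sin (Real.pi * t) : ℂ) * g0
        + 2 * (Real.sin (Real.pi * t) : ℂ) * f3
    ext i j
    fin_cases i <;> fin_cases j <;>
      simp [f3, f4, g0.trans (by rw [f3, neg_zero]), g1.trans (by rw [f4, neg_zero])]
  · rintro rfl
    exact ⟨by simp, fun j => by simp⟩

end prongs

/-- For `Π = ⟨x₁, x₋₁, x₂, x₋₂ | x₁²x₋₁²x₂²x₋₂² = 1⟩`,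
`G = SL(2,ℂ)` and `t ∈ ℝ`, the assignment `φ_t(x_{±1}) = ±iσ₁`,
`φ_t(x_{±2}) = cos(πt)I₂ ± i sin(πt)σ₂` defines a homomorphism `φ_t : Π → G`;
moreover `⋂_j ker(Ad_{φ_t(x_j)} − 1)` (trace-zero matrices commuting with all four
`φ_t(x_j)`) equals `ℂσ₁` if `t ∈ ℤ` and `0` if `sin(πt) ≠ 0`, and
`⋂_j ker(Ad_{φ_t(x_j)} + 1)` (trace-zero `ξ` with `φ_t(x_j) ξ = −ξ φ_t(x_j)`)
equals `ℂσ₃` if `t ∈ 1/2 + ℤ` and `0` if `cos(πt) ≠ 0`. -/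
theorem example_family_with_jumping_H0_H2 (t : ℝ) :
    (∃ φ : PresentedGroup
        ({FreeGroup.of 0 ^ 2 * FreeGroup.of 1 ^ 2 * FreeGroup.of 2 ^ 2 * FreeGroup.of 3 ^ 2} :
          Set (FreeGroup (Fin 4))) →* Matrix.SpecialLinearGroup (Fin 2) ℂ,
      ∀ j : Fin 4, (φ (PresentedGroup.of j) : Matrix (Fin 2) (Fin 2) ℂ) = phiMat t j) ∧
    ((∃ n : ℤ, t = n) →
      {ξ : Matrix (Fin 2) (Fin 2) ℂ | ξ.trace = 0 ∧
          ∀ j : Fin 4, phiMat t j * ξ = ξ * phiMat t j}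
        = {ξ | ∃ c : ℂ, ξ = c • !![0, 1; 1, 0]}) ∧
    (Real.sin (Real.pi * t) ≠ 0 →
      {ξ : Matrix (Fin 2) (Fin 2) ℂ | ξ.trace = 0 ∧
          ∀ j : Fin 4, phiMat t j * ξ = ξ * phiMat t j} = {0}) ∧
    ((∃ n : ℤ, t = 1 / 2 + n) →
      {ξ : Matrix (Fin 2) (Fin 2) ℂ | ξ.trace = 0 ∧
          ∀ j : Fin 4, phiMat t j * ξ = -(ξ * phiMat t j)}
        = {ξ | ∃ c : ℂ, ξ = c • !![1, 0; 0, -1]}) ∧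
    (Real.cos (Real.pi * t) ≠ 0 →
      {ξ : Matrix (Fin 2) (Fin 2) ℂ | ξ.trace = 0 ∧
          ∀ j : Fin 4, phiMat t j * ξ = -(ξ * phiMat t j)} = {0}) := by
  refine ⟨?_, ?_, ?_, ?_, ?_⟩
  · set M : Fin 4 → Matrix.SpecialLinearGroup (Fin 2) ℂ :=
      fun j => ⟨phiMat t j, phiMatdet t j⟩ with hM
    have hrel : M 0 ^ 2 * M 1 ^ 2 * M 2 ^ 2 * M 3 ^ 2 = 1 := by
      apply Subtype.ext
      push_cast [hM]
      exact relprod t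
    have h : ∀ r ∈ ({FreeGroup.of 0 ^ 2 * FreeGroup.of 1 ^ 2 * FreeGroup.of 2 ^ 2 *
          FreeGroup.of 3 ^ 2} : Set (FreeGroup (Fin 4))), FreeGroup.lift M r = 1 := by
      intro r hr
      rw [Set.mem_singleton_iff] at hr
      subst hr
      simp [_root_.map_mul, map_pow, ← mul_assoc, hrel]
    exact ⟨PresentedGroup.toGroup h, fun j => by rw [PresentedGroup.toGroup.of]⟩
  · rintro ⟨n, rfl⟩
    apply prong2
    norm_cast
    rw [mul_comm]
    exact Real.sin_int_mul_pi n
  · intro hs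
    exact prong3 t (Complex.ofReal_ne_zero.mpr hs)
  · rintro ⟨n, rfl⟩
    have hcos : (Real.cos (Real.pi * (1/2 + n)) : ℂ) = 0 := by
      norm_cast
      rw [show Real.pi * (1/2 + (n:ℝ)) = Real.pi/2 + n * Real.pi by ring, Real.cos_add]
      simp [Real.cos_pi_div_two, Real.sin_int_mul_pi]
    have hsin : (Real.sin (Real.pi * (1/2 + n)) : ℂ) ≠ 0 := by
      intro h
      have := csc (1/2 + n)
      rw [hcos, h] at this
      norm_num at this
    exact prong4 _ hcos hsin
  · intro hcs
    exact prong5 t (Complex.ofReal_ne_zero.mpr hcs)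
end
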